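/- Theorem 1 (symmetric part): suppose the noise rate satisfies η < 1 - 1/K. If f* is a global minimizer of the clean risk over a class F of classifiers (R(f*) ≤ R(f) for all f ∈ F), then f* is a global minimizer of the symmetric-noise risk over F (R^η(f*) ≤ R^η(f) for all f ∈ F); i.e. the RCE loss is noise tolerant under symmetric label noise. -/
import Mathlib


open Finset MeasureTheory

/-- Clipped logarithm: `L t = Real.log t` for `t > 0` and `L 0 = A`. -/
noncomputable def clog (A : ℝ) (t : ℝ) : ℝ := if t = 0 then A else Real.log t

/-- One-hot vector at label `y`. -/
def onehot {K : ℕ} (y : Fin K) : Fin K → ℝ := fun k => if k = y then 1 else 0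

/-- Reverse Cross Entropy loss with clipping constant `A`. -/
noncomputable def rce {K : ℕ} (A : ℝ) (p : Fin K → ℝ) (y : Fin K) : ℝ :=
  -∑ k, p k * clog A (onehot y k)

/-- `p` is a probability vector. -/
def IsProbVec {K : ℕ} (p : Fin K → ℝ) : Prop := (∀ k, 0 ≤ p k) ∧ ∑ k, p k = 1

/-- A classifier: pointwise a probability vector, coordinatewise measurable. -/
def IsClassifier {𝒳 : Type*} [MeasurableSpace 𝒳] {K : ℕ} (f : 𝒳 → Fin K → ℝ) : Prop :=
  (∀ x, IsProbVec (f x)) ∧ ∀ k : Fin K, Measurable fun xy : 𝒳 × Fin K => f xy.1 k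

/-- Clean RCE risk `R(f) = ∫ ℓ_rce(f x, y) dμ(x, y)`. -/
noncomputable def cleanRisk {𝒳 : Type*} [MeasurableSpace 𝒳] {K : ℕ} (A : ℝ)
    (μ : Measure (𝒳 × Fin K)) (f : 𝒳 → Fin K → ℝ) : ℝ :=
  ∫ xy, rce A (f xy.1) xy.2 ∂μ

/-- Noisy RCE risk under symmetric label noise with rate `η`. -/
noncomputable def symNoisyRisk {𝒳 : Type*} [MeasurableSpace 𝒳] {K : ℕ} (A : ℝ)
    (μ : Measure (𝒳 × Fin K)) (η : ℝ) (f : 𝒳 → Fin K → ℝ) : ℝ :=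
  ∫ xy, ((1 - η) * rce A (f xy.1) xy.2
      + (η / ((K : ℝ) - 1)) * ∑ k ∈ univ \ {xy.2}, rce A (f xy.1) k) ∂μ

lemma rce_eq {K : ℕ} (A : ℝ) {p : Fin K → ℝ} (hp : IsProbVec p) (y : Fin K) :
    rce A p y = A * (p y - 1) := by
  have h : ∀ k, p k * clog A (onehot y k) = p k * A - (if k = y then p k * A else 0) := by
    intro k
    by_cases h : k = y <;> simp [clog, onehot, h]
  simp only [rce, h, Finset.sum_sub_distrib, Finset.sum_ite_eq', Finset.mem_univ, if_true,
    ← Finset.sum_mul, hp.2]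
  ring

lemma sum_rce_eq {K : ℕ} (A : ℝ) {p : Fin K → ℝ} (hp : IsProbVec p) (y : Fin K) :
    ∑ k ∈ univ \ {y}, rce A p k = A * (2 - (K : ℝ) - p y) := by
  have h1 : ∑ k ∈ univ \ {y}, rce A p k = (∑ k, rce A p k) - rce A p y := by
    rw [Finset.sum_sdiff_eq_sub (by simp)]
    simp
  have h2 : ∑ k, rce A p k = A * (1 - (K : ℝ)) := by
    simp only [rce_eq A hp, ← Finset.mul_sum, Finset.sum_sub_distrib, hp.2]
    simp
  rw [h1, h2, rce_eq A hp]
  ring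

lemma integrable_rce {𝒳 : Type*} [MeasurableSpace 𝒳] {K : ℕ} (A : ℝ)
    (μ : Measure (𝒳 × Fin K)) [IsProbabilityMeasure μ] {f : 𝒳 → Fin K → ℝ}
    (hf : IsClassifier f) :
    Integrable (fun xy : 𝒳 × Fin K => rce A (f xy.1) xy.2) μ := by
  have hmeas : Measurable (fun xy : 𝒳 × Fin K => rce A (f xy.1) xy.2) := by
    apply measurable_from_prod_countable_left
    intro y
    have : (fun x : 𝒳 => rce A (f x) y) = fun x => A * (f x y - 1) := by
      funext x
      exact rce_eq A (hf.1 x) y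
    rw [this]
    have := (hf.2 y).comp (f := fun x : 𝒳 => ((x, y) : 𝒳 × Fin K))
      (measurable_id.prodMk measurable_const)
    exact (this.sub measurable_const).const_mul A
  refine ⟨hmeas.aestronglyMeasurable, ?_⟩
  apply MeasureTheory.HasFiniteIntegral.of_bounded (C := |A|)
  filter_upwards with xy
  rw [rce_eq A (hf.1 xy.1) xy.2]
  have h0 : 0 ≤ f xy.1 xy.2 := (hf.1 xy.1).1 xy.2
  have h1 : f xy.1 xy.2 ≤ 1 := by
    have := (hf.1 xy.1).2
    calc f xy.1 xy.2 ≤ ∑ k, f xy.1 k :=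
          Finset.single_le_sum (fun k _ => (hf.1 xy.1).1 k) (Finset.mem_univ _)
      _ = 1 := this
  rw [Real.norm_eq_abs, abs_mul]
  have : |f xy.1 xy.2 - 1| ≤ 1 := by
    rw [abs_le]; constructor <;> linarith
  nlinarith [abs_nonneg A]

lemma symNoisyRisk_eq {𝒳 : Type*} [MeasurableSpace 𝒳] {K : ℕ} (hK : 2 ≤ K) (A : ℝ)
    (μ : Measure (𝒳 × Fin K)) [IsProbabilityMeasure μ] (η : ℝ) {f : 𝒳 → Fin K → ℝ}
    (hf : IsClassifier f) :
    symNoisyRisk A μ η f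
      = -A * η + (1 - η - η / ((K : ℝ) - 1)) * cleanRisk A μ f := by
  have hK1 : (1 : ℝ) ≤ (K : ℝ) - 1 := by
    have : (2 : ℝ) ≤ (K : ℝ) := by exact_mod_cast hK
    linarith
  have hKne : ((K : ℝ) - 1) ≠ 0 := by linarith
  have hpt : ∀ xy : 𝒳 × Fin K,
      (1 - η) * rce A (f xy.1) xy.2
        + (η / ((K : ℝ) - 1)) * ∑ k ∈ univ \ {xy.2}, rce A (f xy.1) k
      = -A * η + (1 - η - η / ((K : ℝ) - 1)) * rce A (f xy.1) xy.2 := by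
    intro xy
    rw [sum_rce_eq A (hf.1 xy.1) xy.2, rce_eq A (hf.1 xy.1) xy.2]
    field_simp
    ring
  have hint := integrable_rce A μ hf
  unfold symNoisyRisk
  simp only [hpt]
  rw [integral_add (integrable_const _) (hint.const_mul _), integral_const,
    integral_const_mul]
  simp [cleanRisk]

/-- Theorem 1 (symmetric part): suppose the noise rate satisfies `η < 1 - 1/K`. If `f*` is
a global minimizer of the clean risk over a class `F` of classifiers, then `f*` is a global
minimizer of the symmetric-noise risk over `F`; i.e. the RCE loss is noise tolerant under
symmetric label noise. -/
theorem rce_noise_tolerant_symmetric {𝒳 : Type*} [MeasurableSpace 𝒳] {K : ℕ} (hK : 2 ≤ K)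
    (A : ℝ) (hA : A < 0) (μ : Measure (𝒳 × Fin K)) [IsProbabilityMeasure μ]
    (F : Set (𝒳 → Fin K → ℝ)) (hF : ∀ f ∈ F, IsClassifier f)
    (η : ℝ) (hη0 : 0 ≤ η) (hη1 : η < 1) (hη : η < 1 - 1 / (K : ℝ))
    (fstar : 𝒳 → Fin K → ℝ) (hfstar : fstar ∈ F)
    (hmin : ∀ f ∈ F, cleanRisk A μ fstar ≤ cleanRisk A μ f) :
    ∀ f ∈ F, symNoisyRisk A μ η fstar ≤ symNoisyRisk A μ η f := by
  intro f hfF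
  rw [symNoisyRisk_eq hK A μ η (hF f hfF), symNoisyRisk_eq hK A μ η (hF fstar hfstar)]
  have hK2 : (2 : ℝ) ≤ (K : ℝ) := by exact_mod_cast hK
  have hKpos : (0 : ℝ) < (K : ℝ) := by linarith
  have hKne : ((K : ℝ) - 1) > 0 := by linarith
  have hmul : η * (K : ℝ) < (K : ℝ) - 1 := by
    have h1 : (1 : ℝ) / (K : ℝ) * (K : ℝ) = 1 := by field_simp
    nlinarith
  have hβ : 0 ≤ 1 - η - η / ((K : ℝ) - 1) := by
    have h2 : 1 - η - η / ((K : ℝ) - 1) = ((K : ℝ) - 1 - η * K) / ((K : ℝ) - 1) := by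
      field_simp; ring
    rw [h2]
    apply div_nonneg <;> linarith
  have := hmin f hfF
  nlinarith
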